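/- Let λ ∈ ℂ and let P be a ℂ^{ℓ+1}-valued function that is twice differentiable on an open interval containing (0,1] except possibly 0, with P, P′, P″ continuous at u = 1, and which satisfies (1−u²)P″(u) − u·C·P′(u) − V·P(u) = λ·P(u) for all u ∈ (0,1]. Then P′(1) = −C⁻¹(V + λ)P(1) and (i/2)·Q₁·P′(1) − (i/2)·M·P(1) − (1/2)·V₀·P(1) = L(λ)·P(1), where L(λ) = −(i/2)Q₁C⁻¹(V+λ) − (i/2)M − (1/2)V₀ = −i·Σ_{j=1}^{ℓ}( j(ℓ−j+1)((j−1)(j+1)+λ)/(2(2j−1)(2j+1)) )E_{j,j−1} − i·Σ_{j=0}^{ℓ−1}((j+1)(ℓ+j+2)/2)E_{j,j+1} − Σ_{j=0}^{ℓ}(j(j+1)/2)E_{jj}. -/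
import Mathlib


namespace Stmt5

/-- `C = Σ_j (2j+3) E_{jj}` (an invertible matrix). -/
noncomputable def Cmat (ℓ : ℕ) : Matrix (Fin (ℓ+1)) (Fin (ℓ+1)) ℂ :=
  Matrix.diagonal fun j => 2*((j:ℕ):ℂ) + 3

/-- `V = Σ_j j(j+2) E_{jj}`. -/
noncomputable def Vmat (ℓ : ℕ) : Matrix (Fin (ℓ+1)) (Fin (ℓ+1)) ℂ :=
  Matrix.diagonal fun j => ((j:ℕ):ℂ) * (((j:ℕ):ℂ) + 2)

/-- `Q₁ = Σ_{j=1}^{ℓ} (j(ℓ-j+1)/(2j-1)) E_{j,j-1}`. -/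
noncomputable def Q1 (ℓ : ℕ) : Matrix (Fin (ℓ+1)) (Fin (ℓ+1)) ℂ :=
  Matrix.of fun j k =>
    if (k:ℕ) + 1 = (j:ℕ) then ((j:ℕ):ℂ) * ((ℓ:ℂ) - ((j:ℕ):ℂ) + 1) / (2*((j:ℕ):ℂ) - 1)
    else 0

/-- `M = Σ_{j=0}^{ℓ-1} (j+1)(ℓ+j+2) E_{j,j+1}`. -/
noncomputable def Mmat (ℓ : ℕ) : Matrix (Fin (ℓ+1)) (Fin (ℓ+1)) ℂ :=
  Matrix.of fun j k =>
    if (j:ℕ) + 1 = (k:ℕ) then (((j:ℕ):ℂ) + 1) * ((ℓ:ℂ) + ((j:ℕ):ℂ) + 2)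
    else 0

/-- `V₀ = Σ_j j(j+1) E_{jj}`. -/
noncomputable def V0 (ℓ : ℕ) : Matrix (Fin (ℓ+1)) (Fin (ℓ+1)) ℂ :=
  Matrix.diagonal fun j => ((j:ℕ):ℂ) * (((j:ℕ):ℂ) + 1)

/-- The matrix `L(λ)` with subdiagonal `-i j(ℓ-j+1)((j-1)(j+1)+λ)/(2(2j-1)(2j+1))`,
superdiagonal `-i (j+1)(ℓ+j+2)/2` and diagonal `-j(j+1)/2`. -/
noncomputable def Lmat (ℓ : ℕ) (lam : ℂ) : Matrix (Fin (ℓ+1)) (Fin (ℓ+1)) ℂ :=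
  Matrix.of fun j k =>
    if (k:ℕ) + 1 = (j:ℕ) then
      -Complex.I * (((j:ℕ):ℂ) * ((ℓ:ℂ) - ((j:ℕ):ℂ) + 1) * ((((j:ℕ):ℂ) - 1) * (((j:ℕ):ℂ) + 1) + lam)
        / (2 * (2*((j:ℕ):ℂ) - 1) * (2*((j:ℕ):ℂ) + 1)))
    else if (j:ℕ) + 1 = (k:ℕ) then
      -Complex.I * ((((j:ℕ):ℂ) + 1) * ((ℓ:ℂ) + ((j:ℕ):ℂ) + 2) / 2)
    else if j = k then -(((j:ℕ):ℂ) * (((j:ℕ):ℂ) + 1) / 2)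
    else 0

/-- If `P` solves `(1-u²)P'' - uCP' - VP = λP` on `(0,1]` and is twice differentiable
on an open interval containing `(0,1]` (except possibly `0`), then
`P'(1) = -C⁻¹(V+λ)P(1)`, and the value of the first-order operator `Ē` at `u = 1`
is `L(λ)P(1)`, where `L(λ) = -(i/2)Q₁C⁻¹(V+λ) - (i/2)M - (1/2)V₀`. -/
theorem boundary_value_L (ℓ : ℕ) (lam : ℂ) (b : ℝ) (hb : 1 < b)
    (P P' P'' : ℝ → Fin (ℓ+1) → ℂ)
    (hP : ∀ u ∈ Set.Ioo (0:ℝ) b, HasDerivAt P (P' u) u)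
    (hP' : ∀ u ∈ Set.Ioo (0:ℝ) b, HasDerivAt P' (P'' u) u)
    (hPc : ContinuousAt P 1) (hP'c : ContinuousAt P' 1) (hP''c : ContinuousAt P'' 1)
    (heq : ∀ u ∈ Set.Ioc (0:ℝ) 1,
      (1 - (u:ℂ)^2) • P'' u - (u:ℂ) • (Cmat ℓ).mulVec (P' u) - (Vmat ℓ).mulVec (P u)
        = lam • P u) :
    P' 1 = -(((Cmat ℓ)⁻¹ * (Vmat ℓ + lam • (1 : Matrix (Fin (ℓ+1)) (Fin (ℓ+1)) ℂ))).mulVec (P 1)) ∧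
    (Complex.I/2) • (Q1 ℓ).mulVec (P' 1) - (Complex.I/2) • (Mmat ℓ).mulVec (P 1)
        - (2⁻¹:ℂ) • (V0 ℓ).mulVec (P 1) = (Lmat ℓ lam).mulVec (P 1) ∧
    Lmat ℓ lam
      = -((Complex.I/2) • (Q1 ℓ * (Cmat ℓ)⁻¹ * (Vmat ℓ + lam • (1 : Matrix (Fin (ℓ+1)) (Fin (ℓ+1)) ℂ))))
        - (Complex.I/2) • Mmat ℓ - (2⁻¹:ℂ) • V0 ℓ := by
  have hdet : IsUnit (Cmat ℓ).det := by
    rw [Cmat, Matrix.det_diagonal, isUnit_iff_ne_zero, Finset.prod_ne_zero_iff]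
    intro j _
    have : ((2*(j:ℕ)+3 : ℕ) : ℂ) ≠ 0 := Nat.cast_ne_zero.mpr (by omega)
    push_cast at this
    convert this using 2
  have hX : Vmat ℓ + lam • (1 : Matrix (Fin (ℓ+1)) (Fin (ℓ+1)) ℂ)
      = Matrix.diagonal (fun j : Fin (ℓ+1) => ((j:ℕ):ℂ) * (((j:ℕ):ℂ) + 2) + lam) := by
    ext j k
    by_cases h : j = k <;> simp [Vmat, Matrix.one_apply, Matrix.diagonal_apply, h]
  have hne : ∀ j : Fin (ℓ+1), (2*((j:ℕ):ℂ) + 3) ≠ 0 := by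
    intro j
    have : ((2*(j:ℕ)+3 : ℕ) : ℂ) ≠ 0 := Nat.cast_ne_zero.mpr (by omega)
    push_cast at this
    convert this using 2
  have hCinv : (Cmat ℓ)⁻¹ = Matrix.diagonal (fun j : Fin (ℓ+1) => (2*((j:ℕ):ℂ) + 3)⁻¹) := by
    apply Matrix.inv_eq_right_inv
    rw [Cmat, Matrix.diagonal_mul_diagonal, ← Matrix.diagonal_one]
    have h : (fun i : Fin (ℓ+1) => (2*((i:ℕ):ℂ) + 3) * (2*((i:ℕ):ℂ) + 3)⁻¹) = fun _ => (1:ℂ) :=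
      funext fun j => mul_inv_cancel₀ (hne j)
    rw [h]
  have heq1 := heq 1 ⟨zero_lt_one, le_refl 1⟩
  have hCmul : (Cmat ℓ).mulVec (P' 1)
      = -((Vmat ℓ + lam • (1 : Matrix (Fin (ℓ+1)) (Fin (ℓ+1)) ℂ)).mulVec (P 1)) := by
    rw [Matrix.add_mulVec, Matrix.smul_mulVec, Matrix.one_mulVec]
    funext i
    have h := congrFun heq1 i
    simp only [Pi.sub_apply, Pi.smul_apply, Pi.neg_apply, Pi.add_apply, smul_eq_mul] at h ⊢
    push_cast at h
    ring_nf at h ⊢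
    linear_combination -h
  have part1 : P' 1 = -(((Cmat ℓ)⁻¹ * (Vmat ℓ + lam • (1 : Matrix (Fin (ℓ+1)) (Fin (ℓ+1)) ℂ))).mulVec (P 1)) := by
    calc P' 1 = ((Cmat ℓ)⁻¹ * Cmat ℓ).mulVec (P' 1) := by
          rw [Matrix.nonsing_inv_mul _ hdet, Matrix.one_mulVec]
      _ = (Cmat ℓ)⁻¹.mulVec ((Cmat ℓ).mulVec (P' 1)) := by rw [Matrix.mulVec_mulVec]
      _ = -(((Cmat ℓ)⁻¹ * (Vmat ℓ + lam • (1 : Matrix (Fin (ℓ+1)) (Fin (ℓ+1)) ℂ))).mulVec (P 1)) := by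
          rw [hCmul, Matrix.mulVec_neg, Matrix.mulVec_mulVec]
  have part3 : Lmat ℓ lam
      = -((Complex.I/2) • (Q1 ℓ * (Cmat ℓ)⁻¹ * (Vmat ℓ + lam • (1 : Matrix (Fin (ℓ+1)) (Fin (ℓ+1)) ℂ))))
        - (Complex.I/2) • Mmat ℓ - (2⁻¹:ℂ) • V0 ℓ := by
    rw [hCinv, hX]
    ext j k
    by_cases h1 : (k:ℕ) + 1 = (j:ℕ)
    · have h2 : ¬ ((j:ℕ) + 1 = (k:ℕ)) := by omega
      have h3 : j ≠ k := fun h => by rw [h] at h1; omega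
      have hj : ((j:ℕ):ℂ) = ((k:ℕ):ℂ) + 1 := by rw [← h1]; push_cast; ring
      have ha : (2*((k:ℕ):ℂ) + 1) ≠ 0 := by
        have : ((2*(k:ℕ)+1 : ℕ) : ℂ) ≠ 0 := Nat.cast_ne_zero.mpr (by omega)
        push_cast at this; convert this using 2
      have hb2 : (2*((k:ℕ):ℂ) + 3) ≠ 0 := hne k
      simp only [Lmat, Q1, Mmat, V0, Matrix.of_apply, Matrix.sub_apply, Matrix.neg_apply,
        Matrix.smul_apply, Matrix.mul_assoc, Matrix.diagonal_mul_diagonal, Matrix.mul_diagonal,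
        Matrix.diagonal_apply_ne _ h3, if_pos h1, if_neg h2, smul_eq_mul]
      rw [hj]
      field_simp
      ring
    · by_cases h2 : (j:ℕ) + 1 = (k:ℕ)
      · have h3 : j ≠ k := fun h => by rw [h] at h2; omega
        simp only [Lmat, Q1, Mmat, V0, Matrix.of_apply, Matrix.sub_apply, Matrix.neg_apply,
          Matrix.smul_apply, Matrix.mul_assoc, Matrix.diagonal_mul_diagonal, Matrix.mul_diagonal,
          Matrix.diagonal_apply_ne _ h3, if_pos h2, if_neg h1, smul_eq_mul]
        ring
      · by_cases h3 : j = k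
        · subst h3
          simp only [Lmat, Q1, Mmat, V0, Matrix.of_apply, Matrix.sub_apply, Matrix.neg_apply,
            Matrix.smul_apply, Matrix.mul_assoc, Matrix.diagonal_mul_diagonal, Matrix.mul_diagonal,
            Matrix.diagonal_apply_eq, if_neg h1, if_neg h2, if_pos rfl, if_true, smul_eq_mul]
          ring
        · simp only [Lmat, Q1, Mmat, V0, Matrix.of_apply, Matrix.sub_apply, Matrix.neg_apply,
            Matrix.smul_apply, Matrix.mul_assoc, Matrix.diagonal_mul_diagonal, Matrix.mul_diagonal,
            Matrix.diagonal_apply_ne _ h3, if_neg h1, if_neg h2, if_neg h3, smul_eq_mul]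
          ring
  refine ⟨part1, ?_, part3⟩
  rw [part1, part3]
  simp only [Matrix.sub_mulVec, Matrix.neg_mulVec, Matrix.smul_mulVec,
    Matrix.mulVec_neg, Matrix.mul_assoc, ← Matrix.mulVec_mulVec, smul_neg]

end Stmt5
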